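/- Let μ_S, μ_T be probability measures on X, f : X → {0,1} a fixed labeling function, and H a set of {0,1}-valued hypotheses. Write L_μ(h) = μ{x : h(x) ≠ f(x)}. Then for every h ∈ H and every h* ∈ H: L_{μ_T}(h) ≤ L_{μ_S}(h) + L_{μ_S}(h*) + L_{μ_T}(h*) + (1/2)·d_{H∆H}(μ_S, μ_T), where d_{H∆H}(μ_S, μ_T) = 2·sup_{h₁,h₂∈H} |μ_S{h₁ ≠ h₂} − μ_T{h₁ ≠ h₂}|. In particular, L_{μ_T}(h) ≤ L_{μ_S}(h) + (1/2)·d_{H∆H}(μ_S, μ_T) + λ, with λ = inf_{h'∈H}(L_{μ_S}(h') + L_{μ_T}(h')) replaced by any achieved value L_{μ_S}(h*) + L_{μ_T}(h*). -/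

import Mathlib

open MeasureTheory

/-- Loss of hypothesis h under μ with respect to the labeling function f. -/
noncomputable def lossF {X : Type*} [MeasurableSpace X] (μ : Measure X)
    (f h : X → Bool) : ℝ :=
  (μ {x | h x ≠ f x}).toReal

/-- Real-valued disagreement loss between two hypotheses under μ. -/
noncomputable def disLoss {X : Type*} [MeasurableSpace X] (μ : Measure X)
    (h h' : X → Bool) : ℝ :=
  (μ {x | h x ≠ h' x}).toReal

/-- The H∆H-divergence between two distributions. -/
noncomputable def dHdH {X : Type*} [MeasurableSpace X] (μS μT : Measure X)
    (H : Set (X → Bool)) : ℝ :=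
  2 * sSup {r : ℝ | ∃ h₁ ∈ H, ∃ h₂ ∈ H, r = |disLoss μS h₁ h₂ - disLoss μT h₁ h₂|}

theorem measureReal_setOf_ne_le_add {X β : Type*} [MeasurableSpace X] (μ : Measure X)
    [IsFiniteMeasure μ] (a b c : X → β) :
    μ.real {x | a x ≠ c x} ≤ μ.real {x | a x ≠ b x} + μ.real {x | b x ≠ c x} := by
  have hsub : {x | a x ≠ c x} ⊆ {x | a x ≠ b x} ∪ {x | b x ≠ c x} := by
    intro x hac
    by_cases hab : a x = b x
    · exact Or.inr (show b x ≠ c x from hab ▸ hac)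
    · exact Or.inl hab
  exact (measureReal_mono hsub).trans (measureReal_union_le _ _)

section Loss

variable {X : Type*} [MeasurableSpace X] (μ : Measure X) [IsFiniteMeasure μ]

theorem lossF_le_disLoss_add_lossF (f h h' : X → Bool) :
    lossF μ f h ≤ disLoss μ h h' + lossF μ f h' :=
  measureReal_setOf_ne_le_add μ h h' f

theorem disLoss_le_lossF_add_lossF (f h h' : X → Bool) :
    disLoss μ h h' ≤ lossF μ f h + lossF μ f h' := by
  have hsymm : {x | f x ≠ h' x} = {x | h' x ≠ f x} := by
    ext x
    exact ne_comm
  have := measureReal_setOf_ne_le_add μ h f h'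
  rwa [hsymm] at this

theorem disLoss_le_measureReal_univ (h h' : X → Bool) : disLoss μ h h' ≤ μ.real Set.univ :=
  measureReal_mono (Set.subset_univ _)

end Loss

section Divergence

variable {X : Type*} [MeasurableSpace X] (μS μT : Measure X) [IsFiniteMeasure μS]
  [IsFiniteMeasure μT]

theorem bddAbove_abs_disLoss_sub (H : Set (X → Bool)) :
    BddAbove {r : ℝ | ∃ h₁ ∈ H, ∃ h₂ ∈ H, r = |disLoss μS h₁ h₂ - disLoss μT h₁ h₂|} := by
  refine ⟨μS.real Set.univ + μT.real Set.univ, ?_⟩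
  rintro _ ⟨h₁, -, h₂, -, rfl⟩
  have hS := disLoss_le_measureReal_univ μS h₁ h₂
  have hT := disLoss_le_measureReal_univ μT h₁ h₂
  have hS₀ : 0 ≤ disLoss μS h₁ h₂ := measureReal_nonneg
  have hT₀ : 0 ≤ disLoss μT h₁ h₂ := measureReal_nonneg
  exact abs_sub_le_iff.mpr ⟨by linarith, by linarith⟩

theorem abs_disLoss_sub_le_half_dHdH {H : Set (X → Bool)} {h₁ h₂ : X → Bool} (h₁H : h₁ ∈ H)
    (h₂H : h₂ ∈ H) :
    |disLoss μS h₁ h₂ - disLoss μT h₁ h₂| ≤ (1 / 2) * dHdH μS μT H := by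
  rw [dHdH, ← mul_assoc, one_div_mul_cancel two_ne_zero, one_mul]
  exact le_csSup (bddAbove_abs_disLoss_sub μS μT H) ⟨h₁, h₁H, h₂, h₂H, rfl⟩

end Divergence

/-- the distribution-shift core of the domain-adaptation bound:
L_{μT}(h) ≤ L_{μS}(h) + L_{μS}(h*) + L_{μT}(h*) + (1/2)·d_{H∆H}(μS, μT)
for every h, h* ∈ H. -/
theorem stmt_13 {X : Type*} [MeasurableSpace X] (μS μT : Measure X)
    [IsProbabilityMeasure μS] [IsProbabilityMeasure μT]
    (f : X → Bool) (H : Set (X → Bool))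
    (h hstar : X → Bool) (hh : h ∈ H) (hhstar : hstar ∈ H) :
    lossF μT f h ≤ lossF μS f h + lossF μS f hstar + lossF μT f hstar
      + (1 / 2) * dHdH μS μT H := by
  have hshift := (abs_sub_le_iff.mp (abs_disLoss_sub_le_half_dHdH μS μT hh hhstar)).2
  calc lossF μT f h ≤ disLoss μT h hstar + lossF μT f hstar :=
        lossF_le_disLoss_add_lossF μT f h hstar
    _ ≤ disLoss μS h hstar + (1 / 2) * dHdH μS μT H + lossF μT f hstar := by linarith
    _ ≤ lossF μS f h + lossF μS f hstar + (1 / 2) * dHdH μS μT H + lossF μT f hstar := by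
        linarith [disLoss_le_lossF_add_lossF μS f h hstar]
    _ = _ := by ring
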